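/- For every t ∈ ℝ, g₂(g₁(t)) = g₁(g₂(g₂(t))). (This is the Baumslag–Solitar relation t x t⁻¹ = x² satisfied by t ↦ g₁, x ↦ g₂.) -/

import Mathlib

/-- The element `g₁` of the Lodha–Moore group as a piecewise fractional linear map. -/
noncomputable def g₁ (t : ℝ) : ℝ :=
  if t ≤ 0 then t
  else if t ≤ 1 / 2 then 2 * t / (2 * t + 1)
  else if t ≤ 1 then 1 / (3 - 2 * t)
  else t

/-- The element `g₂` of the Lodha–Moore group as a piecewise fractional linear map. -/
noncomputable def g₂ (t : ℝ) : ℝ :=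
  if t ≤ 0 then t
  else if t ≤ 1 / 3 then t / (1 - t)
  else if t ≤ 1 / 2 then (4 * t - 1) / (5 * t - 1)
  else if t ≤ 1 then 1 / (2 - t)
  else t

/-!
Both sides are piecewise fractional linear. The breakpoints of `g₂ ∘ g₁` are `0, 1/2, 1` and the
`g₁`-preimages `1/4, 1/3` of the breakpoints `1/3, 1/2` of `g₂`; those of `g₁ ∘ g₂ ∘ g₂` are the
`g₂`- and `g₂ ∘ g₂`-preimages of `0, 1/3, 1/2, 1`, namely `0, 1/4, 1/3, 1/2, 1`. Outside `(0, 1]`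
both sides are the identity, and on `(0, 1/4]`, `(1/4, 1/2]`, `(1/2, 1]` both are the Möbius
maps `2t`, `(6t - 1)/(8t - 1)`, `(3 - 2t)/(5 - 4t)` respectively. Each composition is checked by
clearing the outer denominator: what remains is a multiple of the relation `x * q = p` satisfied by
the inner value `x = p / q`.
-/

open Set

lemma div_mem_Ioc {α : Type*} [Field α] [LinearOrder α] [IsStrictOrderedRing α] {a b p q : α}
    (hq : 0 < q) (ha : a * q < p) (hb : p ≤ b * q) : p / q ∈ Ioc a b :=
  ⟨(lt_div_iff₀ hq).2 ha, (div_le_iff₀ hq).2 hb⟩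

variable {t : ℝ}

lemma g₁_of_nonpos (h : t ≤ 0) : g₁ t = t := by
  rw [g₁, if_pos h]

lemma g₁_of_mem_Ioc_zero_half (h : t ∈ Ioc 0 (1 / 2)) : g₁ t = 2 * t / (2 * t + 1) := by
  rw [g₁, if_neg h.1.not_ge, if_pos h.2]

lemma g₁_of_mem_Ioc_half_one (h : t ∈ Ioc (1 / 2) 1) : g₁ t = 1 / (3 - 2 * t) := by
  rw [g₁, if_neg (by linarith [h.1]), if_neg h.1.not_ge, if_pos h.2]

lemma g₁_of_one_lt (h : 1 < t) : g₁ t = t := by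
  rw [g₁, if_neg (by linarith), if_neg (by linarith), if_neg h.not_ge]

lemma g₂_of_nonpos (h : t ≤ 0) : g₂ t = t := by
  rw [g₂, if_pos h]

lemma g₂_of_mem_Ioc_zero_third (h : t ∈ Ioc 0 (1 / 3)) : g₂ t = t / (1 - t) := by
  rw [g₂, if_neg h.1.not_ge, if_pos h.2]

lemma g₂_of_mem_Ioc_third_half (h : t ∈ Ioc (1 / 3) (1 / 2)) :
    g₂ t = (4 * t - 1) / (5 * t - 1) := by
  rw [g₂, if_neg (by linarith [h.1]), if_neg h.1.not_ge, if_pos h.2]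

lemma g₂_of_mem_Ioc_half_one (h : t ∈ Ioc (1 / 2) 1) : g₂ t = 1 / (2 - t) := by
  rw [g₂, if_neg (by linarith [h.1]), if_neg (by linarith [h.1]), if_neg h.1.not_ge, if_pos h.2]

lemma g₂_of_one_lt (h : 1 < t) : g₂ t = t := by
  rw [g₂, if_neg (by linarith), if_neg (by linarith), if_neg (by linarith), if_neg h.not_ge]

lemma g₂_g₁_of_mem_Ioc_zero_quarter (h : t ∈ Ioc 0 (1 / 4)) : g₂ (g₁ t) = 2 * t := by
  obtain ⟨h0, h1⟩ := h
  have hq : 0 < 2 * t + 1 := by linarith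
  have hx := g₁_of_mem_Ioc_zero_half ⟨h0, by linarith⟩
  have hx_mem : g₁ t ∈ Ioc 0 (1 / 3) := by
    rw [hx]; exact div_mem_Ioc hq (by linarith) (by linarith)
  rw [g₂_of_mem_Ioc_zero_third hx_mem, div_eq_iff (by linarith [hx_mem.2])]
  rw [eq_div_iff hq.ne'] at hx
  linear_combination hx

lemma g₂_g₁_of_mem_Ioc_quarter_half (h : t ∈ Ioc (1 / 4) (1 / 2)) :
    g₂ (g₁ t) = (6 * t - 1) / (8 * t - 1) := by
  obtain ⟨h0, h1⟩ := h
  have hq : 0 < 2 * t + 1 := by linarith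
  have hx := g₁_of_mem_Ioc_zero_half ⟨by linarith, h1⟩
  have hx_mem : g₁ t ∈ Ioc (1 / 3) (1 / 2) := by
    rw [hx]; exact div_mem_Ioc hq (by linarith) (by linarith)
  rw [g₂_of_mem_Ioc_third_half hx_mem, div_eq_div_iff (by linarith [hx_mem.1]) (by linarith)]
  rw [eq_div_iff hq.ne'] at hx
  linear_combination hx

lemma g₂_g₁_of_mem_Ioc_half_one (h : t ∈ Ioc (1 / 2) 1) :
    g₂ (g₁ t) = (3 - 2 * t) / (5 - 4 * t) := by
  obtain ⟨h0, h1⟩ := h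
  have hq : 0 < 3 - 2 * t := by linarith
  have hx := g₁_of_mem_Ioc_half_one ⟨h0, h1⟩
  have hx_mem : g₁ t ∈ Ioc (1 / 2) 1 := by
    rw [hx]; exact div_mem_Ioc hq (by linarith) (by linarith)
  rw [g₂_of_mem_Ioc_half_one hx_mem, div_eq_div_iff (by linarith [hx_mem.2]) (by linarith)]
  rw [eq_div_iff hq.ne'] at hx
  linear_combination hx

lemma g₂_g₂_of_mem_Ioc_zero_quarter (h : t ∈ Ioc 0 (1 / 4)) :
    g₂ (g₂ t) = t / (1 - 2 * t) := by
  obtain ⟨h0, h1⟩ := h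
  have hq : 0 < 1 - t := by linarith
  have hx := g₂_of_mem_Ioc_zero_third ⟨h0, by linarith⟩
  have hx_mem : g₂ t ∈ Ioc 0 (1 / 3) := by
    rw [hx]; exact div_mem_Ioc hq (by linarith) (by linarith)
  rw [g₂_of_mem_Ioc_zero_third hx_mem, div_eq_div_iff (by linarith [hx_mem.2]) (by linarith)]
  rw [eq_div_iff hq.ne'] at hx
  linear_combination hx

lemma g₂_g₂_of_mem_Ioc_quarter_half (h : t ∈ Ioc (1 / 4) (1 / 2)) :
    g₂ (g₂ t) = (5 * t - 1) / (6 * t - 1) := by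
  obtain ⟨h0, h1⟩ := h
  rcases le_or_gt t (1 / 3) with h2 | h2
  · have hq : 0 < 1 - t := by linarith
    have hx := g₂_of_mem_Ioc_zero_third ⟨by linarith, h2⟩
    have hx_mem : g₂ t ∈ Ioc (1 / 3) (1 / 2) := by
      rw [hx]; exact div_mem_Ioc hq (by linarith) (by linarith)
    rw [g₂_of_mem_Ioc_third_half hx_mem, div_eq_div_iff (by linarith [hx_mem.1]) (by linarith)]
    rw [eq_div_iff hq.ne'] at hx
    linear_combination hx
  · have hq : 0 < 5 * t - 1 := by linarith
    have hx := g₂_of_mem_Ioc_third_half ⟨h2, h1⟩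
    have hx_mem : g₂ t ∈ Ioc (1 / 2) 1 := by
      rw [hx]; exact div_mem_Ioc hq (by linarith) (by linarith)
    rw [g₂_of_mem_Ioc_half_one hx_mem, div_eq_div_iff (by linarith [hx_mem.2]) (by linarith)]
    rw [eq_div_iff hq.ne'] at hx
    linear_combination hx

lemma g₂_g₂_of_mem_Ioc_half_one (h : t ∈ Ioc (1 / 2) 1) :
    g₂ (g₂ t) = (2 - t) / (3 - 2 * t) := by
  obtain ⟨h0, h1⟩ := h
  have hq : 0 < 2 - t := by linarith
  have hx := g₂_of_mem_Ioc_half_one ⟨h0, h1⟩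
  have hx_mem : g₂ t ∈ Ioc (1 / 2) 1 := by
    rw [hx]; exact div_mem_Ioc hq (by linarith) (by linarith)
  rw [g₂_of_mem_Ioc_half_one hx_mem, div_eq_div_iff (by linarith [hx_mem.2]) (by linarith)]
  rw [eq_div_iff hq.ne'] at hx
  linear_combination hx

lemma g₁_g₂_g₂_of_mem_Ioc_zero_quarter (h : t ∈ Ioc 0 (1 / 4)) : g₁ (g₂ (g₂ t)) = 2 * t := by
  obtain ⟨h0, h1⟩ := h
  have hq : 0 < 1 - 2 * t := by linarith
  have hx := g₂_g₂_of_mem_Ioc_zero_quarter ⟨h0, h1⟩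
  have hx_mem : g₂ (g₂ t) ∈ Ioc 0 (1 / 2) := by
    rw [hx]; exact div_mem_Ioc hq (by linarith) (by linarith)
  rw [g₁_of_mem_Ioc_zero_half hx_mem, div_eq_iff (by linarith [hx_mem.1])]
  rw [eq_div_iff hq.ne'] at hx
  linear_combination 2 * hx

lemma g₁_g₂_g₂_of_mem_Ioc_quarter_half (h : t ∈ Ioc (1 / 4) (1 / 2)) :
    g₁ (g₂ (g₂ t)) = (6 * t - 1) / (8 * t - 1) := by
  obtain ⟨h0, h1⟩ := h
  have hq : 0 < 6 * t - 1 := by linarith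
  have hx := g₂_g₂_of_mem_Ioc_quarter_half ⟨h0, h1⟩
  have hx_mem : g₂ (g₂ t) ∈ Ioc (1 / 2) 1 := by
    rw [hx]; exact div_mem_Ioc hq (by linarith) (by linarith)
  rw [g₁_of_mem_Ioc_half_one hx_mem, div_eq_div_iff (by linarith [hx_mem.2]) (by linarith)]
  rw [eq_div_iff hq.ne'] at hx
  linear_combination 2 * hx

lemma g₁_g₂_g₂_of_mem_Ioc_half_one (h : t ∈ Ioc (1 / 2) 1) :
    g₁ (g₂ (g₂ t)) = (3 - 2 * t) / (5 - 4 * t) := by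
  obtain ⟨h0, h1⟩ := h
  have hq : 0 < 3 - 2 * t := by linarith
  have hx := g₂_g₂_of_mem_Ioc_half_one ⟨h0, h1⟩
  have hx_mem : g₂ (g₂ t) ∈ Ioc (1 / 2) 1 := by
    rw [hx]; exact div_mem_Ioc hq (by linarith) (by linarith)
  rw [g₁_of_mem_Ioc_half_one hx_mem, div_eq_div_iff (by linarith [hx_mem.2]) (by linarith)]
  rw [eq_div_iff hq.ne'] at hx
  linear_combination 2 * hx

/-- The Baumslag–Solitar relation `t x t⁻¹ = x²` satisfied by `t ↦ g₁`, `x ↦ g₂`. -/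
theorem bs_relation (t : ℝ) : g₂ (g₁ t) = g₁ (g₂ (g₂ t)) := by
  rcases le_or_gt t 0 with h0 | h0
  · rw [g₁_of_nonpos h0, g₂_of_nonpos h0, g₂_of_nonpos h0, g₁_of_nonpos h0]
  rcases le_or_gt t (1 / 4) with h1 | h1
  · rw [g₂_g₁_of_mem_Ioc_zero_quarter ⟨h0, h1⟩, g₁_g₂_g₂_of_mem_Ioc_zero_quarter ⟨h0, h1⟩]
  rcases le_or_gt t (1 / 2) with h2 | h2
  · rw [g₂_g₁_of_mem_Ioc_quarter_half ⟨h1, h2⟩, g₁_g₂_g₂_of_mem_Ioc_quarter_half ⟨h1, h2⟩]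
  rcases le_or_gt t 1 with h3 | h3
  · rw [g₂_g₁_of_mem_Ioc_half_one ⟨h2, h3⟩, g₁_g₂_g₂_of_mem_Ioc_half_one ⟨h2, h3⟩]
  · rw [g₁_of_one_lt h3, g₂_of_one_lt h3, g₂_of_one_lt h3, g₁_of_one_lt h3]
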